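/- Let α > 0 and let K ⊂ ℤ²∖{(0,0)} be a finite set symmetric under k ↦ −k. Suppose ω : ℝ → (K → ℝ) is differentiable, satisfies ω_{−k}(t) = ω_k(t) for all k ∈ K and t, and solves the Galerkin-truncated 2D Euler system dω_k/dt = Σ_{m,n∈K, m+n=k} A(m,n) ω_m ω_n for every k ∈ K. Then the truncated kinetic energy E(t) = Σ_{k∈K} (k₁² + (αk₂)²)⁻¹ ω_k(t)² is constant in t. -/

import Mathlib

/-!
Along a solution, `dE/dt = 2 Σ_k c_k ω_k Σ_{m+n=k} A(m,n) ω_m ω_n` with `c_k = (k₁² + (αk₂)²)⁻¹`.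
Since `K = -K` and `ω_{-k} = ω_k`, the substitution `k ↦ -k` turns this into a sum over triads
`m + n + k = 0` of `c_k A(m,n) ω_m ω_n ω_k`. On a triad the cross products `m × n`, `n × k`,
`k × m` coincide, so `c_k A(m,n) + c_m A(n,k) + c_n A(k,m) = 0`, and the sum, being invariant
under cyclic permutations of `(m, n, k)`, vanishes.
-/

/-- The interaction coefficient
`A(m,n) = (α/2)·[1/(n₁²+(αn₂)²) − 1/(m₁²+(αm₂)²)]·(m₁n₂ − m₂n₁)`. -/
noncomputable def coefA (α : ℝ) (m n : ℤ × ℤ) : ℝ :=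
  (α / 2) * (1 / ((n.1 : ℝ) ^ 2 + (α * (n.2 : ℝ)) ^ 2)
      - 1 / ((m.1 : ℝ) ^ 2 + (α * (m.2 : ℝ)) ^ 2)) *
    ((m.1 : ℝ) * (n.2 : ℝ) - (m.2 : ℝ) * (n.1 : ℝ))

open Finset

theorem Finset.sum_sum_sum_eq_zero_of_cyclic {ι M : Type*} [AddCommMonoid M] [IsAddTorsionFree M]
    (s : Finset ι) (F : ι → ι → ι → M)
    (hF : ∀ m ∈ s, ∀ n ∈ s, ∀ k ∈ s, F m n k + F n k m + F k m n = 0) :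
    ∑ m ∈ s, ∑ n ∈ s, ∑ k ∈ s, F m n k = 0 := by
  set S := ∑ m ∈ s, ∑ n ∈ s, ∑ k ∈ s, F m n k
  have hrot : ∑ m ∈ s, ∑ n ∈ s, ∑ k ∈ s, F n k m = S := by
    rw [sum_comm]; exact sum_congr rfl fun _ _ => sum_comm
  have hrot' : ∑ m ∈ s, ∑ n ∈ s, ∑ k ∈ s, F k m n = S := by
    rw [sum_congr rfl fun _ _ => sum_comm, sum_comm]
  have h3 : 3 • S = 0 := calc
    3 • S = S + ∑ m ∈ s, ∑ n ∈ s, ∑ k ∈ s, F n k m + ∑ m ∈ s, ∑ n ∈ s, ∑ k ∈ s, F k m n := by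
      rw [hrot, hrot', succ_nsmul, two_nsmul]
    _ = ∑ m ∈ s, ∑ n ∈ s, ∑ k ∈ s, (F m n k + F n k m + F k m n) := by
      simp only [S, sum_add_distrib]
    _ = 0 := sum_eq_zero fun m hm => sum_eq_zero fun n hn => sum_eq_zero fun k hk =>
      hF m hm n hn k hk
  exact IsAddTorsionFree.nsmul_right_injective three_ne_zero (h3.trans (nsmul_zero 3).symm)

theorem Finset.sum_sum_sum_ite_add_eq {G M : Type*} [AddCommGroup G] [DecidableEq G]
    [AddCommMonoid M] (s : Finset G) (hs : ∀ k ∈ s, -k ∈ s) (F : G → G → G → M) :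
    ∑ k ∈ s, ∑ m ∈ s, ∑ n ∈ s, (if m + n = k then F m n k else 0)
      = ∑ m ∈ s, ∑ n ∈ s, ∑ k ∈ s, (if m + n + k = 0 then F m n (-k) else 0) := by
  rw [sum_comm]
  refine sum_congr rfl fun m _ => ?_
  rw [sum_comm]
  refine sum_congr rfl fun n _ => ?_
  refine sum_nbij' Neg.neg Neg.neg (fun k hk => hs k hk) (fun k hk => hs k hk)
    (fun k _ => neg_neg k) (fun k _ => neg_neg k) fun k _ => ?_
  simp only [neg_neg, ← sub_eq_add_neg, sub_eq_zero, eq_comm]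

noncomputable def energyWeight (α : ℝ) (k : ℤ × ℤ) : ℝ :=
  ((k.1 : ℝ) ^ 2 + (α * (k.2 : ℝ)) ^ 2)⁻¹

lemma energyWeight_neg (α : ℝ) (k : ℤ × ℤ) : energyWeight α (-k) = energyWeight α k := by
  simp [energyWeight]

lemma energyWeight_mul_coefA_add_cyclic (α : ℝ) {m n k : ℤ × ℤ} (h : m + n + k = 0) :
    energyWeight α k * coefA α m n + energyWeight α m * coefA α n k
      + energyWeight α n * coefA α k m = 0 := by
  obtain rfl : k = -(m + n) := eq_neg_of_add_eq_zero_right h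
  simp only [energyWeight, coefA, Prod.fst_neg, Prod.snd_neg, Prod.fst_add, Prod.snd_add]
  push_cast
  ring

noncomputable def galerkinTerm (α : ℝ) (K : Finset (ℤ × ℤ)) (x : ℤ × ℤ → ℝ) (k : ℤ × ℤ) : ℝ :=
  ∑ m ∈ K, ∑ n ∈ K, (if m + n = k then coefA α m n * x m * x n else 0)

theorem sum_energyWeight_mul_galerkinTerm_eq_zero (α : ℝ) {K : Finset (ℤ × ℤ)}
    (hK : ∀ k ∈ K, -k ∈ K) {x : ℤ × ℤ → ℝ} (hx : ∀ k ∈ K, x (-k) = x k) :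
    ∑ k ∈ K, energyWeight α k * x k * galerkinTerm α K x k = 0 := by
  set F : ℤ × ℤ → ℤ × ℤ → ℤ × ℤ → ℝ := fun m n k =>
    energyWeight α k * coefA α m n * x m * x n * x k
  calc ∑ k ∈ K, energyWeight α k * x k * galerkinTerm α K x k
      = ∑ k ∈ K, ∑ m ∈ K, ∑ n ∈ K, (if m + n = k then F m n k else 0) := by
        refine sum_congr rfl fun k _ => ?_
        simp only [galerkinTerm, mul_sum, mul_ite, mul_zero, F]
        congr! 3; ring
    _ = ∑ m ∈ K, ∑ n ∈ K, ∑ k ∈ K, (if m + n + k = 0 then F m n (-k) else 0) :=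
        sum_sum_sum_ite_add_eq K hK F
    _ = ∑ m ∈ K, ∑ n ∈ K, ∑ k ∈ K, (if m + n + k = 0 then F m n k else 0) := by
        refine sum_congr rfl fun m _ => sum_congr rfl fun n _ => sum_congr rfl fun k hk => ?_
        simp only [F, energyWeight_neg, hx k hk]
    _ = 0 := by
        refine sum_sum_sum_eq_zero_of_cyclic K _ fun m _ n _ k _ => ?_
        by_cases h : m + n + k = 0
        · have h' : n + k + m = 0 := by rw [← h]; abel
          have h'' : k + m + n = 0 := by rw [← h]; abel
          simp only [F, if_pos h, if_pos h', if_pos h'']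
          linear_combination (x m * x n * x k) * energyWeight_mul_coefA_add_cyclic α h
        · have h' : n + k + m ≠ 0 := fun h' => h (by rw [← h']; abel)
          have h'' : k + m + n ≠ 0 := fun h'' => h (by rw [← h'']; abel)
          simp only [if_neg h, if_neg h', if_neg h'', add_zero]

theorem hasDerivAt_sum_mul_sq {ι : Type*} (s : Finset ι) (c : ι → ℝ) {f : ℝ → ι → ℝ} {t : ℝ}
    (hf : ∀ k ∈ s, DifferentiableAt ℝ (fun t => f t k) t) :
    HasDerivAt (fun t => ∑ k ∈ s, c k * f t k ^ 2)
      (2 * ∑ k ∈ s, c k * f t k * deriv (fun t => f t k) t) t := by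
  rw [mul_sum]
  refine HasDerivAt.fun_sum fun k hk => ?_
  refine (((hf k hk).hasDerivAt.pow 2).const_mul (c k)).congr_deriv ?_
  push_cast
  ring

theorem galerkin_energy_conserved_general
    (α : ℝ)
    (K : Finset (ℤ × ℤ)) (hKsym : ∀ k ∈ K, -k ∈ K)
    (ω : ℝ → ℤ × ℤ → ℝ)
    (hdiff : ∀ k ∈ K, Differentiable ℝ (fun t => ω t k))
    (hreal : ∀ t : ℝ, ∀ k ∈ K, ω t (-k) = ω t k)
    (heqn : ∀ k ∈ K, ∀ t : ℝ,
      deriv (fun s => ω s k) t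
        = ∑ m ∈ K, ∑ n ∈ K,
            (if m + n = k then coefA α m n * ω t m * ω t n else 0)) :
    ∀ t s : ℝ,
      (∑ k ∈ K, ((k.1 : ℝ) ^ 2 + (α * (k.2 : ℝ)) ^ 2)⁻¹ * (ω t k) ^ 2)
        = ∑ k ∈ K, ((k.1 : ℝ) ^ 2 + (α * (k.2 : ℝ)) ^ 2)⁻¹ * (ω s k) ^ 2 := by
  have hE : ∀ t, HasDerivAt (fun t => ∑ k ∈ K, energyWeight α k * ω t k ^ 2) 0 t := by
    intro t
    convert hasDerivAt_sum_mul_sq K (energyWeight α) fun k hk => hdiff k hk t using 1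
    have hflux := sum_energyWeight_mul_galerkinTerm_eq_zero α hKsym (hreal t)
    rw [sum_congr rfl fun k hk => congrArg _ (heqn k hk t)]
    exact (mul_eq_zero_of_right 2 hflux).symm
  exact is_const_of_deriv_eq_zero (fun t => (hE t).differentiableAt) fun t => (hE t).deriv

/-- For any symmetric Galerkin truncation of the 2D Euler equation in the real
(cosine) invariant subspace, the truncated kinetic energy `E = Σ_{k∈K} (k₁² + (αk₂)²)⁻¹ ω_k²` is
conserved. -/
theorem galerkin_energy_conserved
    (α : ℝ) (hα : 0 < α)
    (K : Finset (ℤ × ℤ)) (hK0 : (0, 0) ∉ K) (hKsym : ∀ k ∈ K, -k ∈ K)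
    (ω : ℝ → ℤ × ℤ → ℝ)
    (hdiff : ∀ k ∈ K, Differentiable ℝ (fun t => ω t k))
    (hreal : ∀ t : ℝ, ∀ k ∈ K, ω t (-k) = ω t k)
    (heqn : ∀ k ∈ K, ∀ t : ℝ,
      deriv (fun s => ω s k) t
        = ∑ m ∈ K, ∑ n ∈ K,
            (if m + n = k then coefA α m n * ω t m * ω t n else 0)) :
    ∀ t s : ℝ,
      (∑ k ∈ K, ((k.1 : ℝ) ^ 2 + (α * (k.2 : ℝ)) ^ 2)⁻¹ * (ω t k) ^ 2)
        = ∑ k ∈ K, ((k.1 : ℝ) ^ 2 + (α * (k.2 : ℝ)) ^ 2)⁻¹ * (ω s k) ^ 2 :=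
  galerkin_energy_conserved_general α K hKsym ω hdiff hreal heqn
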